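/- Let G = (V, E) be a finite acyclic digraph with exactly one source s, and let (V1, E1), (V2, E2) be a separation of G along a pair {u, v} of distinct vertices with s ∈ V1. Suppose u and v are incomparable in G (neither u dominates v nor v dominates u). Let w_t be a new vertex not in V. Then the digraph (V1 ∪ {w_t}, E1 ∪ {(u, w_t), (v, w_t)}) has exactly one source, namely s. -/

import Mathlib

/-!
Every vertex of a finite acyclic digraph is reachable from a source, so with a unique source `s`
every vertex is reachable from `s`. A source `w ≠ s` of `H1 + M_t` would have an incoming edge in
`E2`, hence lie in `V1 ∩ V2 = {u, v}`; but the path from `s ∈ V1` to `w` enters `w` through an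
edge of `E2`, so it passes through `u` or `v` before reaching `w`, making `u, v` comparable or `G`
cyclic.
-/

/-- `x` dominates `y` in the digraph with edge set `E`: there is a directed
path with at least one edge from `x` to `y`. -/
def Dominates {α : Type*} (E : Finset (α × α)) (x y : α) : Prop :=
  Relation.TransGen (fun a b => (a, b) ∈ E) x y

/-- A separation of the finite digraph `(V, E)` along the pair `{u, v}` of
distinct vertices into `H1 = (V1, E1)` and `H2 = (V2, E2)`. -/
structure Separation {α : Type*} [DecidableEq α] (V : Finset α) (E : Finset (α × α))
    (u v : α) (V1 V2 : Finset α) (E1 E2 : Finset (α × α)) : Prop where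
  ne : u ≠ v
  vUnion : V1 ∪ V2 = V
  vInter : V1 ∩ V2 = {u, v}
  eDisjoint : Disjoint E1 E2
  eUnion : E1 ∪ E2 = E
  mem1 : ∀ e ∈ E1, e.1 ∈ V1 ∧ e.2 ∈ V1
  mem2 : ∀ e ∈ E2, e.1 ∈ V2 ∧ e.2 ∈ V2
/-- A vertex `w` is a source of the digraph `(V, E)`: it belongs to `V` and
has no incoming edge in `E`. -/
def IsSource {α : Type*} (V : Finset α) (E : Finset (α × α)) (w : α) : Prop :=
  w ∈ V ∧ ∀ e ∈ E, e.2 ≠ w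

open Relation

theorem exists_isSource_reflTransGen {α : Type*} {V : Finset α} {E : Finset (α × α)}
    (hE : ∀ e ∈ E, e.1 ∈ V) (hacyc : ∀ x, ¬ Dominates E x x) {x : α} (hx : x ∈ V) :
    ∃ r, IsSource V E r ∧ ReflTransGen (fun a b => (a, b) ∈ E) r x := by
  have : IsStrictOrder α (Dominates E) :=
    { irrefl := hacyc, trans := fun _ _ _ => TransGen.trans }
  refine (V : Set α).toFinite.wellFoundedOn.induction (r := Dominates E) hx
    (P := fun x => ∃ r, IsSource V E r ∧ ReflTransGen (fun a b => (a, b) ∈ E) r x)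
    fun y hy ih => ?_
  by_cases hsrc : IsSource V E y
  · exact ⟨y, hsrc, .refl⟩
  · obtain ⟨z, hzy⟩ : ∃ z, (z, y) ∈ E := by
      simpa [IsSource, Finset.mem_coe.1 hy] using hsrc
    obtain ⟨r, hr, hrz⟩ := ih z (hE _ hzy) (.single hzy)
    exact ⟨r, hr, hrz.tail hzy⟩

namespace Separation

variable {α : Type*} [DecidableEq α] {V V1 V2 : Finset α} {E E1 E2 : Finset (α × α)}
  {u v : α}

theorem eq_or_eq_of_mem_of_mem (hsep : Separation V E u v V1 V2 E1 E2) {y : α} (h1 : y ∈ V1)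
    (h2 : y ∈ V2) : y = u ∨ y = v := by
  simpa [hsep.vInter] using Finset.mem_inter.2 ⟨h1, h2⟩

theorem mem_or_mem (hsep : Separation V E u v V1 V2 E1 E2) {e : α × α} (he : e ∈ E) :
    e ∈ E1 ∨ e ∈ E2 :=
  Finset.mem_union.1 (hsep.eUnion ▸ he)

theorem fst_mem (hsep : Separation V E u v V1 V2 E1 E2) {e : α × α} (he : e ∈ E) :
    e.1 ∈ V := by
  rw [← hsep.vUnion]
  rcases hsep.mem_or_mem he with h | h
  exacts [Finset.mem_union_left _ (hsep.mem1 e h).1, Finset.mem_union_right _ (hsep.mem2 e h).1]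

theorem mem_left_or_dominated (hsep : Separation V E u v V1 V2 E1 E2) {x y : α} (hx : x ∈ V1)
    (hxy : ReflTransGen (fun a b => (a, b) ∈ E) x y) :
    y ∈ V1 ∨ ∃ c, (c = u ∨ c = v) ∧ Dominates E c y := by
  induction hxy with
  | refl => exact .inl hx
  | @tail b y _ hby ih =>
    rcases hsep.mem_or_mem hby with h | h
    · exact .inl (hsep.mem1 _ h).2
    rcases ih with hb | ⟨c, hc, hcb⟩
    · exact .inr ⟨b, hsep.eq_or_eq_of_mem_of_mem hb (hsep.mem2 _ h).1, .single hby⟩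
    · exact .inr ⟨c, hc, hcb.tail hby⟩

theorem exists_dominates_of_mem_right (hsep : Separation V E u v V1 V2 E1 E2) {x b y : α}
    (hx : x ∈ V1) (hxb : ReflTransGen (fun a b => (a, b) ∈ E) x b) (hby : (b, y) ∈ E2) :
    ∃ c, (c = u ∨ c = v) ∧ Dominates E c y := by
  have hbyE : (b, y) ∈ E := hsep.eUnion ▸ Finset.mem_union_right _ hby
  rcases hsep.mem_left_or_dominated hx hxb with hb | ⟨c, hc, hcb⟩
  · exact ⟨b, hsep.eq_or_eq_of_mem_of_mem hb (hsep.mem2 _ hby).1, .single hbyE⟩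
  · exact ⟨c, hc, hcb.tail hbyE⟩

end Separation

/-- If `G` is acyclic with unique source `s ∈ V1` and `u`, `v` are
incomparable in `G`, then attaching the marker `M_t` (a new vertex `wt` with
edges `(u, wt)` and `(v, wt)`) to `H1` yields a digraph with exactly one
source, namely `s`. -/
theorem stmt12 {α : Type*} [DecidableEq α] (V V1 V2 : Finset α)
    (E E1 E2 : Finset (α × α)) (u v s wt : α)
    (hsep : Separation V E u v V1 V2 E1 E2)
    (hacyc : ∀ x : α, ¬ Dominates E x x)
    (hsrc : IsSource V E s) (huniq : ∀ w : α, IsSource V E w → w = s)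
    (hs1 : s ∈ V1)
    (hincomp : ¬ Dominates E u v ∧ ¬ Dominates E v u)
    (hwt : wt ∉ V) :
    IsSource (insert wt V1) (insert (u, wt) (insert (v, wt) E1)) s ∧
    ∀ w : α, IsSource (insert wt V1) (insert (u, wt) (insert (v, wt) E1)) w → w = s := by
  have hE1 : E1 ⊆ E := hsep.eUnion ▸ Finset.subset_union_left
  have hV1 : V1 ⊆ V := hsep.vUnion ▸ Finset.subset_union_left
  have hwts : wt ≠ s := fun h => hwt (h ▸ hsrc.1)
  refine ⟨⟨Finset.mem_insert_of_mem hs1, ?_⟩, fun w ⟨hwV, hwin⟩ => ?_⟩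
  · simp only [Finset.mem_insert, forall_eq_or_imp]
    exact ⟨hwts, hwts, fun e he => hsrc.2 e (hE1 he)⟩
  have hw1 : w ∈ V1 := (Finset.mem_insert.1 hwV).resolve_left
    fun h => hwin _ (Finset.mem_insert_self _ _) h.symm
  have hin2 : ∀ {b}, (b, w) ∈ E → (b, w) ∈ E2 := fun hb => (hsep.mem_or_mem hb).resolve_left
    fun h => hwin _ (Finset.mem_insert_of_mem (Finset.mem_insert_of_mem h)) rfl
  by_contra hws
  obtain ⟨a, haw⟩ : ∃ a, (a, w) ∈ E := by simpa [IsSource, hV1 hw1] using mt (huniq w) hws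
  have hwuv := hsep.eq_or_eq_of_mem_of_mem hw1 (hsep.mem2 _ (hin2 haw)).2
  obtain ⟨r, hr, hrw⟩ := exists_isSource_reflTransGen (fun _ => hsep.fst_mem) hacyc (hV1 hw1)
  obtain rfl | ⟨b, hsb, hbw⟩ := (huniq r hr ▸ hrw).cases_tail
  · exact hws rfl
  obtain ⟨c, hc, hcw⟩ := hsep.exists_dominates_of_mem_right hs1 hsb (hin2 hbw)
  rcases hc with rfl | rfl <;> rcases hwuv with rfl | rfl
  exacts [hacyc _ hcw, hincomp.1 hcw, hincomp.2 hcw, hacyc _ hcw]
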